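/- For n > 4, the function w(x) = (1+|x|²)^{−(n−4)/2} on ℝⁿ satisfies Δ²w = (n−4)(n−2)n(n+2)·w^{(n+4)/(n−4)}. -/

import Mathlib

/-!
Write `⟨x⟩ = 1 + ‖x‖²`. Since `∂ᵢ⟨x⟩^a = 2a xᵢ⟨x⟩^(a-1)` and `∑ xᵢ² = ⟨x⟩ - 1`,
`Δ⟨x⟩^a = 2a(n+2a-2)⟨x⟩^(a-1) - 4a(a-1)⟨x⟩^(a-2)`. Applying this twice writes `Δ²⟨x⟩^a` in the
powers `a-2`, `a-3`, `a-4`; for `a = -(n-4)/2` we have `n + 2a - 4 = 0`, which kills the first two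
coefficients, and the last one is `16a(a-1)(a-2)(a-3) = (n-4)(n-2)n(n+2)`, while
`w^((n+4)/(n-4)) = ⟨x⟩^(a-4)`.
-/

/-- The partial derivative `∂ᵢ f` on `ℝⁿ = EuclideanSpace ℝ (Fin n)`. -/
noncomputable def pd (n : ℕ) (i : Fin n) (f : EuclideanSpace ℝ (Fin n) → ℝ)
    (x : EuclideanSpace ℝ (Fin n)) : ℝ :=
  fderiv ℝ f x (EuclideanSpace.single i 1)

/-- The Euclidean Laplacian `Δf = ∑ᵢ ∂ᵢ∂ᵢ f` on `ℝⁿ`. -/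
noncomputable def lap (n : ℕ) (f : EuclideanSpace ℝ (Fin n) → ℝ)
    (x : EuclideanSpace ℝ (Fin n)) : ℝ :=
  ∑ i, pd n i (pd n i f) x

open Real

variable {n : ℕ}

lemma pd_linear_comb {f g : EuclideanSpace ℝ (Fin n) → ℝ} {x : EuclideanSpace ℝ (Fin n)}
    (i : Fin n) (c d : ℝ) (hf : DifferentiableAt ℝ f x) (hg : DifferentiableAt ℝ g x) :
    pd n i (fun y => c * f y + d * g y) x = c * pd n i f x + d * pd n i g x := by
  simp only [pd]
  rw [fderiv_fun_add (hf.const_mul c) (hg.const_mul d), fderiv_const_mul hf, fderiv_const_mul hg]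
  rfl

lemma ContDiff.differentiable_pd {f : EuclideanSpace ℝ (Fin n) → ℝ} (hf : ContDiff ℝ 2 f)
    (i : Fin n) : Differentiable ℝ (pd n i f) :=
  ((hf.fderiv_right (m := 1) le_rfl).differentiable one_ne_zero).clm_apply
    (differentiable_const _)

lemma lap_linear_comb {f g : EuclideanSpace ℝ (Fin n) → ℝ} (c d : ℝ) (hf : ContDiff ℝ 2 f)
    (hg : ContDiff ℝ 2 g) (x : EuclideanSpace ℝ (Fin n)) :
    lap n (fun y => c * f y + d * g y) x = c * lap n f x + d * lap n g x := by
  have hpd (i : Fin n) : pd n i (fun y => c * f y + d * g y) =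
      fun y => c * pd n i f y + d * pd n i g y :=
    funext fun y => pd_linear_comb i c d (hf.differentiable two_ne_zero y)
      (hg.differentiable two_ne_zero y)
  simp only [lap, hpd, pd_linear_comb _ c d ((hf.differentiable_pd _) x)
    ((hg.differentiable_pd _) x), Finset.sum_add_distrib, Finset.mul_sum]

noncomputable def bracketPow (n : ℕ) (a : ℝ) (x : EuclideanSpace ℝ (Fin n)) : ℝ :=
  (1 + ‖x‖ ^ 2) ^ a

lemma one_add_norm_sq_pos {E : Type*} [SeminormedAddGroup E] (x : E) : 0 < 1 + ‖x‖ ^ 2 := by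
  positivity

lemma contDiff_bracketPow (a : ℝ) : ContDiff ℝ 2 (bracketPow n a) :=
  (contDiff_const.add (contDiff_norm_sq ℝ)).rpow_const_of_ne fun x => (one_add_norm_sq_pos x).ne'

lemma hasFDerivAt_bracketPow (a : ℝ) (x : EuclideanSpace ℝ (Fin n)) :
    HasFDerivAt (bracketPow n a)
      ((2 * a * bracketPow n (a - 1) x) • innerSL ℝ x) x := by
  refine (((hasStrictFDerivAt_norm_sq x).hasFDerivAt.const_add 1).rpow_const
    (p := a) (Or.inl (one_add_norm_sq_pos x).ne')).congr_fderiv ?_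
  ext v
  simp only [smul_apply, coe_innerSL_apply, nsmul_eq_mul, Nat.cast_ofNat, smul_eq_mul, bracketPow]
  ring

lemma pd_bracketPow (a : ℝ) (i : Fin n) :
    pd n i (bracketPow n a) = fun x => 2 * a * (bracketPow n (a - 1) x * x i) := by
  ext x
  simp only [pd, (hasFDerivAt_bracketPow a x).fderiv, smul_apply, coe_innerSL_apply,
    EuclideanSpace.inner_single_right, ringHom_apply, one_mul, smul_eq_mul]
  ring

lemma pd_pd_bracketPow (a : ℝ) (i : Fin n) (x : EuclideanSpace ℝ (Fin n)) :
    pd n i (pd n i (bracketPow n a)) x =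
      4 * a * (a - 1) * bracketPow n (a - 2) x * x i ^ 2 + 2 * a * bracketPow n (a - 1) x := by
  have h : HasFDerivAt (fun y => 2 * a * (bracketPow n (a - 1) y * y i)) _ x :=
    ((hasFDerivAt_bracketPow (a - 1) x).fun_mul
      (EuclideanSpace.proj i : EuclideanSpace ℝ (Fin n) →L[ℝ] ℝ).hasFDerivAt).const_mul (2 * a)
  rw [pd, pd_bracketPow, h.fderiv]
  simp only [PiLp.proj_apply, show a - 1 - 1 = a - 2 by ring, smul_add, add_apply, smul_apply,
    PiLp.single_eq_same, smul_eq_mul, mul_one, coe_innerSL_apply,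
    EuclideanSpace.inner_single_right, ringHom_apply, one_mul]
  ring

lemma lap_bracketPow (a : ℝ) :
    lap n (bracketPow n a) = fun x =>
      2 * a * (n + 2 * a - 2) * bracketPow n (a - 1) x
        + -4 * a * (a - 1) * bracketPow n (a - 2) x := by
  ext x
  have hsum : ∑ i, x i ^ 2 = ‖x‖ ^ 2 := by
    simp [EuclideanSpace.norm_sq_eq]
  have hmul : bracketPow n (a - 2) x * (1 + ‖x‖ ^ 2) = bracketPow n (a - 1) x := by
    rw [bracketPow, bracketPow, ← rpow_add_one (one_add_norm_sq_pos x).ne']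
    ring_nf
  simp only [lap, pd_pd_bracketPow, Finset.sum_add_distrib, ← Finset.mul_sum, hsum,
    Finset.sum_const, Finset.card_univ, Fintype.card_fin, nsmul_eq_mul]
  linear_combination (4 * a * (a - 1)) * hmul

lemma lap_lap_bracketPow (a : ℝ) (x : EuclideanSpace ℝ (Fin n)) :
    lap n (lap n (bracketPow n a)) x =
      4 * a * (a - 1) * (n + 2 * a - 2) * (n + 2 * a - 4) * bracketPow n (a - 2) x
        - 16 * a * (a - 1) * (a - 2) * (n + 2 * a - 4) * bracketPow n (a - 3) x
        + 16 * a * (a - 1) * (a - 2) * (a - 3) * bracketPow n (a - 4) x := by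
  rw [lap_bracketPow, lap_linear_comb _ _ (contDiff_bracketPow _) (contDiff_bracketPow _),
    lap_bracketPow, lap_bracketPow]
  simp only [show a - 1 - 1 = a - 2 by ring, show a - 1 - 2 = a - 3 by ring,
    show a - 2 - 1 = a - 3 by ring, show a - 2 - 2 = a - 4 by ring]
  ring

/-- For `n > 4`, the standard bubble `w(x) = (1+|x|²)^{−(n−4)/2}` on `ℝⁿ` satisfies
`Δ²w = (n−4)(n−2)n(n+2)·w^{(n+4)/(n−4)}`. -/
theorem bilap_bubble (n : ℕ) (hn : 4 < n)
    (w : EuclideanSpace ℝ (Fin n) → ℝ)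
    (hw : ∀ x, w x = (1 + ‖x‖ ^ 2) ^ (-(((n : ℝ) - 4) / 2)))
    (x : EuclideanSpace ℝ (Fin n)) :
    lap n (lap n w) x =
      ((n : ℝ) - 4) * ((n : ℝ) - 2) * (n : ℝ) * ((n : ℝ) + 2)
        * w x ^ (((n : ℝ) + 4) / ((n : ℝ) - 4)) := by
  have hn4 : (n : ℝ) - 4 ≠ 0 := sub_ne_zero.mpr (by exact_mod_cast hn.ne')
  have hw' : w = bracketPow n (-(((n : ℝ) - 4) / 2)) := funext hw
  have hpow : w x ^ (((n : ℝ) + 4) / ((n : ℝ) - 4)) =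
      bracketPow n (-(((n : ℝ) - 4) / 2) - 4) x := by
    rw [hw x, ← rpow_mul (one_add_norm_sq_pos x).le, bracketPow]
    congr 1
    field_simp
    ring
  rw [hw', lap_lap_bracketPow, ← hw', hpow]
  ring
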